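/- arXiv:2105.01560 — 3 statements merged into one kernel-verified Lean document; each statement's English description precedes it below -/
import Mathlib

section
/- Under the redistribution hypotheses (P' agrees with P outside X̃, P'(X̃ ∩ {f = -1}) = 0, and P'(E) ≥ P(E) for measurable E ⊆ X̃ ∩ {f = 1}), if P(X̃ ∩ {x : f(x) = 1}) > γ and P'{x : g(x) ≠ f(x)} < ε with ε < γ, then P{x ∈ X̃ : g(x) = 1} > γ - ε. -/
open MeasureTheory
open scoped ENNReal

/-!
On the part `A = X̃ ∩ {f = 1}` the attacked distribution `P'` dominates `P`, so the `P`-mass of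
the points of `A` that `g` labels `-1` is at most `P'{g ≠ f} < ε`. Hence
`γ < P A ≤ P (X̃ ∩ {g = 1}) + ε`.
-/

theorem measure_le_inter_add_sdiff_of_le_on {X : Type*} [MeasurableSpace X] {P P' : Measure X}
    {A B : Set X} (hA : MeasurableSet A) (hB : MeasurableSet B)
    (hdom : ∀ E : Set X, MeasurableSet E → E ⊆ A → P E ≤ P' E) :
    P A ≤ P (A ∩ B) + P' (A \ B) :=
  (measure_le_inter_add_sdiff P A B).trans <|
    add_le_add_right (hdom _ (hA.diff hB) Set.sdiff_subset) _

theorem attack_success_region_general {X : Type*} [MeasurableSpace X]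
    (P P' : Measure X)
    (Xt : Set X) (hXt : MeasurableSet Xt)
    (f g : X → ℤ) (hf : Measurable f) (hg : Measurable g)
    (hdom : ∀ E : Set X, MeasurableSet E → E ⊆ Xt ∩ {x | f x = 1} → P' E ≥ P E)
    (γ ε : ℝ≥0∞) (hεγ : ε < γ)
    (hmass : P (Xt ∩ {x | f x = 1}) > γ)
    (herr : P' {x | g x ≠ f x} < ε) :
    P {x ∈ Xt | g x = 1} > γ - ε := by
  set A := Xt ∩ {x | f x = 1}
  have hA : MeasurableSet A := hXt.inter (hf (measurableSet_singleton 1))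
  have hB : MeasurableSet {x | g x = 1} := hg (measurableSet_singleton 1)
  have hmislabeled : A \ {x | g x = 1} ⊆ {x | g x ≠ f x} :=
    fun x ⟨⟨_, hfx⟩, hgx⟩ hgf => hgx (hgf.trans hfx)
  have hcover : γ < P {x ∈ Xt | g x = 1} + ε :=
    calc γ < P A := hmass
      _ ≤ P (A ∩ {x | g x = 1}) + P' (A \ {x | g x = 1}) :=
        measure_le_inter_add_sdiff_of_le_on hA hB hdom
      _ ≤ P {x ∈ Xt | g x = 1} + ε := by
        gcongr
        · exact fun x ⟨⟨hx, _⟩, hgx⟩ => ⟨hx, hgx⟩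
        · exact (measure_mono hmislabeled).trans herr.le
  exact ENNReal.sub_lt_of_lt_add hεγ.le hcover

/-- Part 1 of the omission-attack theorem: after learning from the attacked
distribution `P'`, the learner labels a `γ - ε` fraction (under `P`) of the
attacked region `X̃` as `1`. -/
theorem attack_success_region {X : Type*} [MeasurableSpace X]
    (P P' : Measure X) [IsProbabilityMeasure P] [IsProbabilityMeasure P']
    (Xt : Set X) (hXt : MeasurableSet Xt)
    (f g : X → ℤ) (hf : Measurable f) (hg : Measurable g)
    (hfr : ∀ x, f x = 1 ∨ f x = -1) (hgr : ∀ x, g x = 1 ∨ g x = -1)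
    (hagree : ∀ E : Set X, MeasurableSet E → E ⊆ Xtᶜ → P' E = P E)
    (hnull : P' (Xt ∩ {x | f x = -1}) = 0)
    (hdom : ∀ E : Set X, MeasurableSet E → E ⊆ Xt ∩ {x | f x = 1} → P' E ≥ P E)
    (γ ε : ℝ≥0∞) (hγ1 : γ < 1) (hε1 : ε < 1) (hεγ : ε < γ)
    (hmass : P (Xt ∩ {x | f x = 1}) > γ)
    (herr : P' {x | g x ≠ f x} < ε) :
    P {x ∈ Xt | g x = 1} > γ - ε :=
  attack_success_region_general P P' Xt hXt f g hf hg hdom γ ε hεγ hmass herr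
end

section
/- Under the redistribution hypotheses (P' agrees with P outside X̃, P'(X̃ ∩ {f = -1}) = 0, and P'(E) ≥ P(E) for measurable E ⊆ X̃ ∩ {f = 1}), if P'{x : g(x) ≠ f(x)} < ε and P(X̃ ∩ {x : f(x) = -1}) < γ', then P{x : g(x) ≠ f(x)} < ε + γ'. -/
open MeasureTheory
open scoped ENNReal

/-!
Split the error region along `C = X̃ ∩ {f = -1}`. Off `C` the attacked distribution `P'`
dominates `P`: it agrees with `P` outside `X̃` and only gains mass on `X̃ ∩ {f = 1}`. Hence the
part of the error region off `C` has `P`-mass at most its `P'`-mass, and the part inside `C`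
has `P`-mass at most `P(C) < γ'`.
-/

namespace MeasureTheory.Measure

variable {α : Type*} [MeasurableSpace α] {μ ν : Measure α}

theorem restrict_compl_union_le_of_agree_of_le {A B : Set α} (hA : MeasurableSet A)
    (hB : MeasurableSet B)
    (hagree : ∀ E : Set α, MeasurableSet E → E ⊆ Aᶜ → ν E = μ E)
    (hdom : ∀ E : Set α, MeasurableSet E → E ⊆ A ∩ B → ν E ≥ μ E) :
    μ.restrict (Aᶜ ∪ B) ≤ ν.restrict (Aᶜ ∪ B) := by
  refine Measure.le_iff.2 fun E hE => ?_
  have hEAB : MeasurableSet (E ∩ (Aᶜ ∪ B)) := hE.inter (hA.compl.union hB)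
  rw [restrict_apply hE, restrict_apply hE, ← measure_inter_add_sdiff (μ := μ) _ hA,
    ← measure_inter_add_sdiff (μ := ν) _ hA]
  refine add_le_add ?_ ?_
  · exact hdom _ (hEAB.inter hA) fun x ⟨⟨_, hx⟩, hxA⟩ => ⟨hxA, hx.resolve_left (· hxA)⟩
  · exact (hagree _ (hEAB.diff hA) fun _ hx => hx.2).ge

theorem apply_le_add_of_restrict_compl_le {s : Set α} (hs : MeasurableSet s)
    (h : μ.restrict sᶜ ≤ ν.restrict sᶜ) (t : Set α) : μ t ≤ ν t + μ s :=
  calc μ t = μ.restrict sᶜ t + μ.restrict s t := by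
        rw [← add_apply, add_comm, restrict_add_restrict_compl hs]
    _ ≤ ν t + μ s := add_le_add ((h t).trans (restrict_apply_le _ _))
        ((measure_mono (Set.subset_univ t)).trans_eq (restrict_apply_univ s))

end MeasureTheory.Measure

theorem attack_accuracy_preserved_general {X : Type*} [MeasurableSpace X]
    (P P' : Measure X)
    (Xt : Set X) (hXt : MeasurableSet Xt)
    (f g : X → ℤ) (hf : Measurable f)
    (hfr : ∀ x, f x = 1 ∨ f x = -1)
    (hagree : ∀ E : Set X, MeasurableSet E → E ⊆ Xtᶜ → P' E = P E)
    (hdom : ∀ E : Set X, MeasurableSet E → E ⊆ Xt ∩ {x | f x = 1} → P' E ≥ P E)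
    (ε γ' : ℝ≥0∞) (herr : P' {x | g x ≠ f x} < ε)
    (homit : P (Xt ∩ {x | f x = -1}) < γ') :
    P {x | g x ≠ f x} < ε + γ' := by
  set C := Xt ∩ {x | f x = -1}
  have hB : MeasurableSet {x | f x = 1} := hf (measurableSet_singleton _)
  have hC : MeasurableSet C := hXt.inter (hf (measurableSet_singleton _))
  have hCcompl : Cᶜ = Xtᶜ ∪ {x | f x = 1} := by
    ext x
    rcases hfr x with hx | hx <;> simp [C, hx]
  have hdominate : P.restrict Cᶜ ≤ P'.restrict Cᶜ := by
    rw [hCcompl]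
    exact Measure.restrict_compl_union_le_of_agree_of_le hXt hB hagree hdom
  calc P {x | g x ≠ f x} ≤ P' {x | g x ≠ f x} + P C :=
        Measure.apply_le_add_of_restrict_compl_le hC hdominate _
    _ < ε + γ' := ENNReal.add_lt_add herr homit

/-- Part 2 of the omission-attack theorem: the learner's true error under `P`
after the attack is bounded by its error under `P'` plus the `P`-mass of the
omitted region `X̃ ∩ {f = -1}`. -/
theorem attack_accuracy_preserved {X : Type*} [MeasurableSpace X]
    (P P' : Measure X) [IsProbabilityMeasure P] [IsProbabilityMeasure P']
    (Xt : Set X) (hXt : MeasurableSet Xt)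
    (f g : X → ℤ) (hf : Measurable f) (hg : Measurable g)
    (hfr : ∀ x, f x = 1 ∨ f x = -1) (hgr : ∀ x, g x = 1 ∨ g x = -1)
    (hagree : ∀ E : Set X, MeasurableSet E → E ⊆ Xtᶜ → P' E = P E)
    (hnull : P' (Xt ∩ {x | f x = -1}) = 0)
    (hdom : ∀ E : Set X, MeasurableSet E → E ⊆ Xt ∩ {x | f x = 1} → P' E ≥ P E)
    (ε γ' : ℝ≥0∞) (herr : P' {x | g x ≠ f x} < ε)
    (homit : P (Xt ∩ {x | f x = -1}) < γ') :
    P {x | g x ≠ f x} < ε + γ' :=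
  attack_accuracy_preserved_general P P' Xt hXt f g hf hfr hagree hdom ε γ' herr homit
end

section
/- Let P, P' be probability measures with P'(E) = P(E) for measurable E ⊆ X \ X̃ and P'(X̃ ∩ {f = -1}) = 0 and P'(E) ≥ P(E) for E ⊆ X̃ ∩ {f = 1}. Then for every h : X → {-1,1} measurable, P'({x : h(x) ≠ f(x)}) ≥ P({x : h(x) ≠ f(x)}) - P(X̃ ∩ {x : f(x) = -1}). -/
/-!
Split the space into the set `G = X̃ᶜ ∪ (X̃ ∩ {f = 1})`, on whose measurable subsets `P ≤ P'`,
and its complement `X̃ ∩ {f = -1}`. Any set `E` satisfies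
`P E ≤ P (E ∩ G) + P Gᶜ ≤ P' E + P Gᶜ`, which is the bound for `E = {h ≠ f}`.
-/

open MeasureTheory Set

namespace MeasureTheory.Measure

variable {α : Type*} [MeasurableSpace α] {μ ν : Measure α} {s : Set α}

theorem restrict_le_restrict_of_forall_subset (hs : MeasurableSet s)
    (h : ∀ t ⊆ s, MeasurableSet t → μ t ≤ ν t) : μ.restrict s ≤ ν.restrict s :=
  le_iff.2 fun t ht => by
    rw [restrict_apply ht, restrict_apply ht]
    exact h _ inter_subset_right (ht.inter hs)

theorem le_add_measure_compl_of_restrict_le (hs : MeasurableSet s)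
    (h : μ.restrict s ≤ ν.restrict s) (t : Set α) : μ t ≤ ν t + μ sᶜ :=
  calc μ t = μ.restrict s t + μ.restrict sᶜ t := by
        rw [← add_apply, restrict_add_restrict_compl hs]
    _ ≤ ν t + μ sᶜ :=
        add_le_add ((h t).trans (restrict_le_self t))
          ((measure_mono (subset_univ t)).trans_eq (restrict_apply_univ _))

end MeasureTheory.Measure

theorem attacked_loss_lower_bound_general {X : Type*} [MeasurableSpace X]
    (P P' : Measure X)
    (Xt : Set X) (hXt : MeasurableSet Xt)
    (f : X → ℤ) (hf : Measurable f) (hfr : ∀ x, f x = 1 ∨ f x = -1)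
    (hagree : ∀ E : Set X, MeasurableSet E → E ⊆ Xtᶜ → P' E = P E)
    (hdom : ∀ E : Set X, MeasurableSet E → E ⊆ Xt ∩ {x | f x = 1} → P' E ≥ P E) :
    ∀ h : X → ℤ, Measurable h → (∀ x, h x = 1 ∨ h x = -1) →
      P' {x | h x ≠ f x} ≥ P {x | h x ≠ f x} - P (Xt ∩ {x | f x = -1}) := by
  intro h _ _
  have hpos : MeasurableSet (Xt ∩ {x | f x = 1}) := hXt.inter (hf (measurableSet_singleton 1))
  have hdisj : Disjoint Xtᶜ (Xt ∩ {x | f x = 1}) :=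
    disjoint_compl_left.mono_right inter_subset_left
  have hcompl : (Xtᶜ ∪ (Xt ∩ {x | f x = 1}))ᶜ = Xt ∩ {x | f x = -1} := by
    ext x
    have hfx := hfr x
    simp only [mem_compl_iff, mem_union, mem_inter_iff, mem_ofPred_eq]
    grind
  have hle : P.restrict (Xtᶜ ∪ (Xt ∩ {x | f x = 1}))
      ≤ P'.restrict (Xtᶜ ∪ (Xt ∩ {x | f x = 1})) := by
    rw [Measure.restrict_union hdisj hpos, Measure.restrict_union hdisj hpos]
    refine add_le_add (le_of_eq ?_) ?_
    · exact (Measure.restrict_congr_meas hXt.compl).2 fun t ht htm => (hagree t htm ht).symm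
    · exact Measure.restrict_le_restrict_of_forall_subset hpos fun t ht htm => hdom t htm ht
  have hbound :=
    Measure.le_add_measure_compl_of_restrict_le (hXt.compl.union hpos) hle {x | h x ≠ f x}
  rw [hcompl] at hbound
  exact tsub_le_iff_right.2 hbound

/-- The attack can reduce the loss of any hypothesis `h` by at most the
omitted mass `P(X̃ ∩ {f = -1})`. -/
theorem attacked_loss_lower_bound {X : Type*} [MeasurableSpace X]
    (P P' : Measure X) [IsProbabilityMeasure P] [IsProbabilityMeasure P']
    (Xt : Set X) (hXt : MeasurableSet Xt)
    (f : X → ℤ) (hf : Measurable f) (hfr : ∀ x, f x = 1 ∨ f x = -1)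
    (hagree : ∀ E : Set X, MeasurableSet E → E ⊆ Xtᶜ → P' E = P E)
    (hnull : P' (Xt ∩ {x | f x = -1}) = 0)
    (hdom : ∀ E : Set X, MeasurableSet E → E ⊆ Xt ∩ {x | f x = 1} → P' E ≥ P E) :
    ∀ h : X → ℤ, Measurable h → (∀ x, h x = 1 ∨ h x = -1) →
      P' {x | h x ≠ f x} ≥ P {x | h x ≠ f x} - P (Xt ∩ {x | f x = -1}) :=
  attacked_loss_lower_bound_general P P' Xt hXt f hf hfr hagree hdom
end
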